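/- On the unit disc Ω = {x ∈ ℝ² : |x| < 1} with boundary Γ, for all u, ω ∈ C^∞(Ω̄) and v, w, h₁, h₂ ∈ C^∞(Γ), the special Green formula holds: (Δu, ω)_Ω + (Δu, w)_Γ + (∂_ν u + v, h₁)_Γ + (∂_ν² u + ∂_Γ v, h₂)_Γ = (u, Δω)_Ω + (u, ∂_ν ω + ∂_Γ² w)_Γ + (D_ν u, −iω − iw + i h₁)_Γ + (D_ν² u, −w − h₂)_Γ + (v, h₁ − ∂_Γ h₂)_Γ. -/

import Mathlib

open MeasureTheory Real Complex
open Set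

/-- `L²(Ω)` inner product on the open unit disc `Ω ⊂ ℝ²`. -/
noncomputable def ipDisc (f g : ℝ × ℝ → ℂ) : ℂ :=
  ∫ x in {x : ℝ × ℝ | x.1 ^ 2 + x.2 ^ 2 < 1}, f x * (starRingEnd ℂ) (g x)

/-- `L²(Γ)` inner product on the unit circle, parametrized by the angle. -/
noncomputable def ipCircle (f g : ℝ → ℂ) : ℂ :=
  ∫ θ in (0 : ℝ)..(2 * π), f θ * (starRingEnd ℂ) (g θ)

/-- The Laplacian on `ℝ²`. -/
noncomputable def lap (u : ℝ × ℝ → ℂ) (x : ℝ × ℝ) : ℂ :=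
  iteratedDeriv 2 (fun s => u (s, x.2)) x.1 + iteratedDeriv 2 (fun t => u (x.1, t)) x.2

/-- Boundary trace on the unit circle, as a function of the angle. -/
noncomputable def bdy (u : ℝ × ℝ → ℂ) (θ : ℝ) : ℂ := u (Real.cos θ, Real.sin θ)

/-- `k`-th normal derivative `∂_ν^k u` on the unit circle, `ν` the inward normal
(`∂_ν = −∂/∂ρ` in polar coordinates), as a function of the angle. -/
noncomputable def dnu (k : ℕ) (u : ℝ × ℝ → ℂ) (θ : ℝ) : ℂ :=
  (-1 : ℂ) ^ k * iteratedDeriv k (fun ρ : ℝ => u (ρ * Real.cos θ, ρ * Real.sin θ)) 1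


noncomputable def pC (r θ : ℝ) : ℝ × ℝ := (r * Real.cos θ, r * Real.sin θ)

lemma hasDerivAt_comp2 {f : ℝ × ℝ → ℂ} (hf : Differentiable ℝ f) {γ : ℝ → ℝ × ℝ}
    {d : ℝ × ℝ} {t : ℝ} (hγ : HasDerivAt γ d t) :
    HasDerivAt (fun s => f (γ s)) (fderiv ℝ f (γ t) d) t :=
  (hf (γ t)).hasFDerivAt.comp_hasDerivAt t hγ

lemma contDiff_fderiv_apply {f : ℝ × ℝ → ℂ} (hf : ContDiff ℝ (⊤ : ℕ∞) f) (v : ℝ × ℝ) :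
    ContDiff ℝ (⊤ : ℕ∞) (fun y => fderiv ℝ f y v) :=
  (hf.fderiv_right (by simp)).clm_apply contDiff_const

lemma hasDerivAt_fderiv_comp2 {f : ℝ × ℝ → ℂ} (hf : ContDiff ℝ (⊤ : ℕ∞) f) {γ : ℝ → ℝ × ℝ}
    {d : ℝ × ℝ} {t : ℝ} (hγ : HasDerivAt γ d t) {V : ℝ → ℝ × ℝ} {V' : ℝ × ℝ}
    (hV : HasDerivAt V V' t) :
    HasDerivAt (fun s => fderiv ℝ f (γ s) (V s))
      (fderiv ℝ (fderiv ℝ f) (γ t) d (V t) + fderiv ℝ f (γ t) V') t := by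
  have h1 : HasDerivAt (fun s => fderiv ℝ f (γ s)) (fderiv ℝ (fderiv ℝ f) (γ t) d) t :=
    (((hf.fderiv_right (m := (⊤ : ℕ∞)) (by simp)).differentiable (by simp)) (γ t)).hasFDerivAt.comp_hasDerivAt t hγ
  exact h1.clm_apply hV

lemma hasDerivAt_curve_r (θ r : ℝ) :
    HasDerivAt (fun s : ℝ => pC s θ) (Real.cos θ, Real.sin θ) r := by
  simpa [pC] using ((hasDerivAt_id r).mul_const (Real.cos θ)).prodMk
    ((hasDerivAt_id r).mul_const (Real.sin θ))

lemma hasDerivAt_curve_t (r θ : ℝ) :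
    HasDerivAt (fun t : ℝ => pC r t) (-(r * Real.sin θ), r * Real.cos θ) θ := by
  simpa [pC, mul_neg] using ((Real.hasDerivAt_cos θ).const_mul r).prodMk
    ((Real.hasDerivAt_sin θ).const_mul r)

lemma hasDerivAt_conj {g : ℝ → ℂ} {g' : ℂ} {t : ℝ} (h : HasDerivAt g g' t) :
    HasDerivAt (fun s => (starRingEnd ℂ) (g s)) ((starRingEnd ℂ) g') t := by
  simpa using h.star

lemma hasDerivAt_slice1 {f : ℝ × ℝ → ℂ} (hf : Differentiable ℝ f) (a t : ℝ) :
    HasDerivAt (fun s => f (s, t)) (fderiv ℝ f (a, t) (1, 0)) a :=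
  hasDerivAt_comp2 hf ((hasDerivAt_id a).prodMk (hasDerivAt_const a t))

lemma hasDerivAt_slice2 {f : ℝ × ℝ → ℂ} (hf : Differentiable ℝ f) (a t : ℝ) :
    HasDerivAt (fun s => f (a, s)) (fderiv ℝ f (a, t) (0, 1)) t :=
  hasDerivAt_comp2 hf ((hasDerivAt_const t a).prodMk (hasDerivAt_id t))

lemma fderiv_apply_const {f : ℝ × ℝ → ℂ} (hf : ContDiff ℝ (⊤ : ℕ∞) f) (x v w : ℝ × ℝ) :
    fderiv ℝ (fun y => fderiv ℝ f y v) x w = fderiv ℝ (fderiv ℝ f) x w v := by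
  rw [fderiv_clm_apply (((hf.fderiv_right (m := (⊤ : ℕ∞)) (by simp)).differentiable (by simp)) x)
    (differentiableAt_const v)]
  simp

lemma lap_eq' {f : ℝ × ℝ → ℂ} (hf : ContDiff ℝ (⊤ : ℕ∞) f) (x : ℝ × ℝ) :
    iteratedDeriv 2 (fun s => f (s, x.2)) x.1 + iteratedDeriv 2 (fun t => f (x.1, t)) x.2
      = fderiv ℝ (fderiv ℝ f) x (1, 0) (1, 0) + fderiv ℝ (fderiv ℝ f) x (0, 1) (0, 1) := by
  have hdf : Differentiable ℝ f := hf.differentiable (by simp)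
  have e1 : deriv (fun s => f (s, x.2)) = fun s => fderiv ℝ f (s, x.2) (1, 0) :=
    funext fun s => (hasDerivAt_slice1 hdf s x.2).deriv
  have e2 : deriv (fun t => f (x.1, t)) = fun t => fderiv ℝ f (x.1, t) (0, 1) :=
    funext fun t => (hasDerivAt_slice2 hdf x.1 t).deriv
  have h1 : iteratedDeriv 2 (fun s => f (s, x.2)) x.1
      = fderiv ℝ (fderiv ℝ f) (x.1, x.2) (1, 0) (1, 0) := by
    rw [show (2 : ℕ) = 1 + 1 from rfl, iteratedDeriv_succ, iteratedDeriv_one, e1]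
    rw [(hasDerivAt_slice1 (f := fun y => fderiv ℝ f y (1, 0))
      ((contDiff_fderiv_apply hf (1, 0)).differentiable (by simp)) x.1 x.2).deriv]
    rw [fderiv_apply_const hf]
  have h2 : iteratedDeriv 2 (fun t => f (x.1, t)) x.2
      = fderiv ℝ (fderiv ℝ f) (x.1, x.2) (0, 1) (0, 1) := by
    rw [show (2 : ℕ) = 1 + 1 from rfl, iteratedDeriv_succ, iteratedDeriv_one, e2]
    rw [(hasDerivAt_slice2 (f := fun y => fderiv ℝ f y (0, 1))
      ((contDiff_fderiv_apply hf (0, 1)).differentiable (by simp)) x.1 x.2).deriv]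
    rw [fderiv_apply_const hf]
  rw [h1, h2]

/-- radial first derivative -/
lemma hasDerivAt_radial {f : ℝ × ℝ → ℂ} (hf : ContDiff ℝ (⊤ : ℕ∞) f) (r θ : ℝ) :
    HasDerivAt (fun s : ℝ => f (pC s θ))
      (fderiv ℝ f (pC r θ) (Real.cos θ, Real.sin θ)) r :=
  hasDerivAt_comp2 (hf.differentiable (by simp)) (hasDerivAt_curve_r θ r)

/-- radial second derivative -/
lemma hasDerivAt_radial2 {f : ℝ × ℝ → ℂ} (hf : ContDiff ℝ (⊤ : ℕ∞) f) (r θ : ℝ) :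
    HasDerivAt (fun s : ℝ => fderiv ℝ f (pC s θ) (Real.cos θ, Real.sin θ))
      (fderiv ℝ (fderiv ℝ f) (pC r θ) (Real.cos θ, Real.sin θ) (Real.cos θ, Real.sin θ)) r := by
  simpa using hasDerivAt_fderiv_comp2 hf (hasDerivAt_curve_r θ r)
    (hasDerivAt_const r (Real.cos θ, Real.sin θ))

lemma bilin_identity (T : ℝ × ℝ →L[ℝ] (ℝ × ℝ →L[ℝ] ℂ)) (c s : ℝ) (h : c ^ 2 + s ^ 2 = 1) :
    T (c, s) (c, s) + T (-s, c) (-s, c) = T (1, 0) (1, 0) + T (0, 1) (0, 1) := by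
  have hv : ∀ a b : ℝ, ((a, b) : ℝ × ℝ) = a • ((1 : ℝ), (0 : ℝ)) + b • ((0 : ℝ), (1 : ℝ)) := by
    intro a b; simp [Prod.ext_iff]
  have hC : (c : ℂ) ^ 2 + (s : ℂ) ^ 2 = 1 := by exact_mod_cast congrArg (Complex.ofReal) h
  rw [hv c s, hv (-s) c]
  simp only [map_add, _root_.map_smul, ContinuousLinearMap.add_apply,
    ContinuousLinearMap.smul_apply, smul_smul, Complex.real_smul]
  push_cast
  linear_combination (T ((1 : ℝ), (0 : ℝ)) ((1 : ℝ), (0 : ℝ))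
    + T ((0 : ℝ), (1 : ℝ)) ((0 : ℝ), (1 : ℝ))) * hC

lemma dnu_one_eq {f : ℝ × ℝ → ℂ} (hf : ContDiff ℝ (⊤ : ℕ∞) f) (θ : ℝ) :
    dnu 1 f θ = -(fderiv ℝ f (pC 1 θ) (Real.cos θ, Real.sin θ)) := by
  have h := (hasDerivAt_radial hf 1 θ).deriv
  simp only [pC] at h
  simp [dnu, iteratedDeriv_one, h, pC]

lemma deriv_radial_eq {f : ℝ × ℝ → ℂ} (hf : ContDiff ℝ (⊤ : ℕ∞) f) (θ : ℝ) :
    (deriv fun ρ : ℝ => f (ρ * Real.cos θ, ρ * Real.sin θ))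
      = fun ρ : ℝ => fderiv ℝ f (pC ρ θ) (Real.cos θ, Real.sin θ) := by
  funext ρ
  have h := (hasDerivAt_radial hf ρ θ).deriv
  simpa only [pC] using h

lemma dnu_two_eq {f : ℝ × ℝ → ℂ} (hf : ContDiff ℝ (⊤ : ℕ∞) f) (θ : ℝ) :
    dnu 2 f θ = fderiv ℝ (fderiv ℝ f) (pC 1 θ)
      (Real.cos θ, Real.sin θ) (Real.cos θ, Real.sin θ) := by
  rw [dnu, show (2 : ℕ) = 1 + 1 from rfl, iteratedDeriv_succ, iteratedDeriv_one,
    deriv_radial_eq hf θ, (hasDerivAt_radial2 hf 1 θ).deriv]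
  ring

lemma bdy_eq_pC (f : ℝ × ℝ → ℂ) (θ : ℝ) : bdy f θ = f (pC 1 θ) := by simp [bdy, pC]

lemma hasDerivAt_bdy {f : ℝ × ℝ → ℂ} (hf : ContDiff ℝ (⊤ : ℕ∞) f) (θ : ℝ) :
    HasDerivAt (bdy f) (fderiv ℝ f (pC 1 θ) (-(Real.sin θ), Real.cos θ)) θ := by
  have h := hasDerivAt_comp2 (hf.differentiable (by simp)) (hasDerivAt_curve_t 1 θ)
  simp only [pC, one_mul] at h ⊢
  exact h

lemma hasDerivAt_bdy2 {f : ℝ × ℝ → ℂ} (hf : ContDiff ℝ (⊤ : ℕ∞) f) (θ : ℝ) :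
    HasDerivAt (deriv (bdy f))
      (fderiv ℝ (fderiv ℝ f) (pC 1 θ) (-(Real.sin θ), Real.cos θ) (-(Real.sin θ), Real.cos θ)
        + fderiv ℝ f (pC 1 θ) (-(Real.cos θ), -(Real.sin θ))) θ := by
  have e : deriv (bdy f) = fun t => fderiv ℝ f (pC 1 t) (-(Real.sin t), Real.cos t) :=
    funext fun t => (hasDerivAt_bdy hf t).deriv
  rw [e]
  have hV : HasDerivAt (fun t : ℝ => ((-(Real.sin t), Real.cos t) : ℝ × ℝ))
      (-(Real.cos θ), -(Real.sin θ)) θ :=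
    ((Real.hasDerivAt_sin θ).neg).prodMk ((Real.hasDerivAt_cos θ))
  have h := hasDerivAt_fderiv_comp2 hf (hasDerivAt_curve_t 1 θ) hV
  simpa only [one_mul] using h

lemma iteratedDeriv_two_bdy {f : ℝ × ℝ → ℂ} (hf : ContDiff ℝ (⊤ : ℕ∞) f) (θ : ℝ) :
    iteratedDeriv 2 (bdy f) θ
      = fderiv ℝ (fderiv ℝ f) (pC 1 θ) (-(Real.sin θ), Real.cos θ) (-(Real.sin θ), Real.cos θ)
        + fderiv ℝ f (pC 1 θ) (-(Real.cos θ), -(Real.sin θ)) := by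
  rw [show (2 : ℕ) = 1 + 1 from rfl, iteratedDeriv_succ, iteratedDeriv_one]
  exact (hasDerivAt_bdy2 hf θ).deriv

/-- The boundary value of the Laplacian in polar form. -/
lemma lap_bdy {f : ℝ × ℝ → ℂ} (hf : ContDiff ℝ (⊤ : ℕ∞) f) (θ : ℝ) :
    bdy (lap f) θ = dnu 2 f θ - dnu 1 f θ + iteratedDeriv 2 (bdy f) θ := by
  have hx : pC 1 θ = (Real.cos θ, Real.sin θ) := by simp [pC]
  have hlin : fderiv ℝ f (pC 1 θ) (-(Real.cos θ), -(Real.sin θ))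
      = -(fderiv ℝ f (pC 1 θ) (Real.cos θ, Real.sin θ)) := by
    have : ((-(Real.cos θ), -(Real.sin θ)) : ℝ × ℝ) = -(Real.cos θ, Real.sin θ) := by
      simp [Prod.ext_iff]
    rw [this, map_neg]
  rw [bdy, show (lap f (Real.cos θ, Real.sin θ))
      = iteratedDeriv 2 (fun s => f (s, Real.sin θ)) (Real.cos θ)
        + iteratedDeriv 2 (fun t => f (Real.cos θ, t)) (Real.sin θ) from rfl,
    lap_eq' hf (Real.cos θ, Real.sin θ), dnu_two_eq hf θ, dnu_one_eq hf θ,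
    iteratedDeriv_two_bdy hf θ, hlin, hx]
  rw [← bilin_identity (fderiv ℝ (fderiv ℝ f) (Real.cos θ, Real.sin θ)) (Real.cos θ) (Real.sin θ)
    (by rw [add_comm]; exact Real.sin_sq_add_cos_sq θ)]
  ring

lemma clm_smul_vec (T : ℝ × ℝ →L[ℝ] ℂ) (r a b : ℝ) :
    T (r * a, r * b) = (r : ℂ) * T (a, b) := by
  have h : ((r * a, r * b) : ℝ × ℝ) = r • ((a, b) : ℝ × ℝ) := by simp [Prod.ext_iff]
  rw [h, _root_.map_smul, Complex.real_smul]

lemma clm_neg_smul_vec (T : ℝ × ℝ →L[ℝ] ℂ) (r a b : ℝ) :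
    T (-(r * a), r * b) = (r : ℂ) * T (-a, b) := by
  have h : ((-(r * a), r * b) : ℝ × ℝ) = r • ((-a, b) : ℝ × ℝ) := by
    simp [Prod.ext_iff, mul_neg]
  rw [h, _root_.map_smul, Complex.real_smul]

lemma clm_neg_neg_vec (T : ℝ × ℝ →L[ℝ] ℂ) (r a b : ℝ) :
    T (-(r * a), -(r * b)) = (r : ℂ) * T (-a, -b) := by
  have h : ((-(r * a), -(r * b)) : ℝ × ℝ) = r • ((-a, -b) : ℝ × ℝ) := by
    simp [Prod.ext_iff, mul_neg]
  rw [h, _root_.map_smul, Complex.real_smul]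

lemma clm2_smul_vec (T : ℝ × ℝ →L[ℝ] (ℝ × ℝ →L[ℝ] ℂ)) (r a b : ℝ) :
    T (-(r * a), r * b) (-(r * a), r * b) = (r : ℂ) * ((r : ℂ) * T (-a, b) (-a, b)) := by
  have h : ((-(r * a), r * b) : ℝ × ℝ) = r • ((-a, b) : ℝ × ℝ) := by
    simp [Prod.ext_iff, mul_neg]
  rw [h]
  simp only [_root_.map_smul, ContinuousLinearMap.smul_apply, Complex.real_smul]

section Green
variable (u ω : ℝ × ℝ → ℂ)

/-- boundary-term generator `H(θ,r) = r (F_ρ Ω̄ − F Ω̄_ρ)` -/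
noncomputable def Gh (θ r : ℝ) : ℂ :=
  (r : ℂ) * (fderiv ℝ u (pC r θ) (Real.cos θ, Real.sin θ) * (starRingEnd ℂ) (ω (pC r θ))
    - u (pC r θ) * (starRingEnd ℂ) (fderiv ℝ ω (pC r θ) (Real.cos θ, Real.sin θ)))

noncomputable def Ga (r θ : ℝ) : ℂ :=
  (fderiv ℝ u (pC r θ) (Real.cos θ, Real.sin θ) * (starRingEnd ℂ) (ω (pC r θ))
    - u (pC r θ) * (starRingEnd ℂ) (fderiv ℝ ω (pC r θ) (Real.cos θ, Real.sin θ)))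
  + (r : ℂ) * (fderiv ℝ (fderiv ℝ u) (pC r θ) (Real.cos θ, Real.sin θ) (Real.cos θ, Real.sin θ)
        * (starRingEnd ℂ) (ω (pC r θ))
      - u (pC r θ) * (starRingEnd ℂ)
        (fderiv ℝ (fderiv ℝ ω) (pC r θ) (Real.cos θ, Real.sin θ) (Real.cos θ, Real.sin θ)))

noncomputable def Gk (r t : ℝ) : ℂ :=
  fderiv ℝ u (pC r t) (-(r * Real.sin t), r * Real.cos t) * (starRingEnd ℂ) (ω (pC r t))
    - u (pC r t) * (starRingEnd ℂ) (fderiv ℝ ω (pC r t) (-(r * Real.sin t), r * Real.cos t))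

noncomputable def Gc (r t : ℝ) : ℂ :=
  ((r : ℂ) * fderiv ℝ (fderiv ℝ u) (pC r t) (-(Real.sin t), Real.cos t) (-(Real.sin t), Real.cos t)
      + fderiv ℝ u (pC r t) (-(Real.cos t), -(Real.sin t))) * (starRingEnd ℂ) (ω (pC r t))
    - u (pC r t) * ((r : ℂ) * (starRingEnd ℂ)
        (fderiv ℝ (fderiv ℝ ω) (pC r t) (-(Real.sin t), Real.cos t) (-(Real.sin t), Real.cos t))
      + (starRingEnd ℂ) (fderiv ℝ ω (pC r t) (-(Real.cos t), -(Real.sin t))))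

variable {u ω}
variable (hu : ContDiff ℝ (⊤ : ℕ∞) u) (hω : ContDiff ℝ (⊤ : ℕ∞) ω)
include hu hω

lemma Gh_hasDerivAt (θ r : ℝ) : HasDerivAt (Gh u ω θ) (Ga u ω r θ) r := by
  have h1 := ((hasDerivAt_radial2 hu r θ).mul
    (hasDerivAt_conj (hasDerivAt_radial hω r θ))).sub
    ((hasDerivAt_radial hu r θ).mul (hasDerivAt_conj (hasDerivAt_radial2 hω r θ)))
  have hr : HasDerivAt (fun s : ℝ => (s : ℂ)) 1 r := by
    simpa using (hasDerivAt_id r).ofReal_comp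
  have h2 := hr.mul h1
  -- `fun s => (s : ℂ) * (...)` has derivative `1 * (...) + r * (...)`
  unfold Gh Ga
  convert h2 using 1
  rfl
  rfl
  simp only [Pi.mul_apply, Pi.sub_apply]
  ring

lemma Gk_hasDerivAt (r t : ℝ) : HasDerivAt (Gk u ω r) ((r : ℂ) * Gc u ω r t) t := by
  have hV : HasDerivAt (fun t' : ℝ => ((-(r * Real.sin t'), r * Real.cos t') : ℝ × ℝ))
      (-(r * Real.cos t), -(r * Real.sin t)) t := by
    simpa [mul_neg] using (((Real.hasDerivAt_sin t).const_mul r).neg).prodMk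
      ((Real.hasDerivAt_cos t).const_mul r)
  have h1 := hasDerivAt_fderiv_comp2 hu (hasDerivAt_curve_t r t) hV
  have h2 := hasDerivAt_fderiv_comp2 hω (hasDerivAt_curve_t r t) hV
  have hΩ := hasDerivAt_conj (hasDerivAt_comp2 (hω.differentiable (by simp))
    (hasDerivAt_curve_t r t))
  have hF := hasDerivAt_comp2 (hu.differentiable (by simp)) (hasDerivAt_curve_t r t)
  have h := (h1.mul hΩ).sub (hF.mul (hasDerivAt_conj h2))
  unfold Gk Gc
  convert h using 1
  rfl
  rfl
  rw [clm2_smul_vec, clm2_smul_vec, clm_neg_neg_vec, clm_neg_neg_vec,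
    clm_neg_smul_vec, clm_neg_smul_vec]
  simp only [map_add, map_mul, Complex.conj_ofReal]
  ring

omit hu hω in
lemma lap_pC {f : ℝ × ℝ → ℂ} (hf : ContDiff ℝ (⊤ : ℕ∞) f) (r θ : ℝ) :
    lap f (pC r θ)
      = fderiv ℝ (fderiv ℝ f) (pC r θ) (Real.cos θ, Real.sin θ) (Real.cos θ, Real.sin θ)
      + fderiv ℝ (fderiv ℝ f) (pC r θ)
          (-(Real.sin θ), Real.cos θ) (-(Real.sin θ), Real.cos θ) := by
  rw [show lap f (pC r θ) = iteratedDeriv 2 (fun s => f (s, (pC r θ).2)) (pC r θ).1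
      + iteratedDeriv 2 (fun t => f ((pC r θ).1, t)) (pC r θ).2 from rfl,
    lap_eq' hf (pC r θ)]
  rw [bilin_identity (fderiv ℝ (fderiv ℝ f) (pC r θ)) (Real.cos θ) (Real.sin θ)
    (by rw [add_comm]; exact Real.sin_sq_add_cos_sq θ)]

lemma Gsum (r θ : ℝ) :
    (r : ℂ) * (lap u (pC r θ) * (starRingEnd ℂ) (ω (pC r θ))
      - u (pC r θ) * (starRingEnd ℂ) (lap ω (pC r θ)))
      = Ga u ω r θ + Gc u ω r θ := by
  rw [lap_pC hu, lap_pC hω]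
  have hneg : ∀ (f : ℝ × ℝ → ℂ), fderiv ℝ f (pC r θ) (-(Real.cos θ), -(Real.sin θ))
      = -(fderiv ℝ f (pC r θ) (Real.cos θ, Real.sin θ)) := by
    intro f
    have h : ((-(Real.cos θ), -(Real.sin θ)) : ℝ × ℝ) = -((Real.cos θ, Real.sin θ) : ℝ × ℝ) := by
      simp [Prod.ext_iff]
    rw [h, map_neg]
  unfold Ga Gc
  rw [hneg u, hneg ω]
  simp only [map_add, map_neg]
  ring

omit hu hω in
lemma Gh_zero (θ : ℝ) : Gh u ω θ 0 = 0 := by simp [Gh]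

omit hu hω in
lemma Gk_periodic (r t : ℝ) : Gk u ω r (t + 2 * π) = Gk u ω r t := by
  simp [Gk, pC, Real.cos_add_two_pi, Real.sin_add_two_pi]

omit hu hω in
lemma Gh_periodic (r : ℝ) : Function.Periodic (fun θ => Gh u ω θ r) (2 * π) := by
  intro t
  simp [Gh, pC, Real.cos_add_two_pi, Real.sin_add_two_pi]

end Green

section Cont

lemma cont_pC : Continuous (fun p : ℝ × ℝ => pC p.1 p.2) := by
  unfold pC
  exact (continuous_fst.mul (Real.continuous_cos.comp continuous_snd)).prodMk
    (continuous_fst.mul (Real.continuous_sin.comp continuous_snd))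

lemma cont_csv : Continuous (fun p : ℝ × ℝ => ((Real.cos p.2, Real.sin p.2) : ℝ × ℝ)) :=
  ((Real.continuous_cos.comp continuous_snd)).prodMk ((Real.continuous_sin.comp continuous_snd))

variable {u ω : ℝ × ℝ → ℂ}

lemma cont_fderiv1 (hu : ContDiff ℝ (⊤ : ℕ∞) u) : Continuous (fderiv ℝ u) :=
  (hu.fderiv_right (m := (⊤ : ℕ∞)) (by simp)).continuous

lemma cont_fderiv2 (hu : ContDiff ℝ (⊤ : ℕ∞) u) : Continuous (fderiv ℝ (fderiv ℝ u)) :=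
  ((hu.fderiv_right (m := (⊤ : ℕ∞)) (by simp)).fderiv_right (m := (⊤ : ℕ∞)) (by simp)).continuous

lemma cont_lap (hu : ContDiff ℝ (⊤ : ℕ∞) u) : Continuous (lap u) := by
  have h : lap u = fun x => fderiv ℝ (fderiv ℝ u) x (1, 0) (1, 0)
      + fderiv ℝ (fderiv ℝ u) x (0, 1) (0, 1) := funext fun x => lap_eq' hu x
  rw [h]
  exact (((cont_fderiv2 hu).clm_apply continuous_const).clm_apply continuous_const).add
    (((cont_fderiv2 hu).clm_apply continuous_const).clm_apply continuous_const)

lemma cont_bdy (hu : ContDiff ℝ (⊤ : ℕ∞) u) : Continuous (bdy u) := by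
  unfold bdy
  exact hu.continuous.comp (Real.continuous_cos.prodMk Real.continuous_sin)

lemma cont_dnu1 (hu : ContDiff ℝ (⊤ : ℕ∞) u) : Continuous (dnu 1 u) := by
  have h : dnu 1 u = fun θ => -(fderiv ℝ u (pC 1 θ) (Real.cos θ, Real.sin θ)) :=
    funext fun θ => dnu_one_eq hu θ
  rw [h]
  have h2 : Continuous (fun θ : ℝ => ((1 : ℝ), θ)) := continuous_const.prodMk continuous_id
  have hc : Continuous fun θ : ℝ => fderiv ℝ u (pC 1 θ) := (cont_fderiv1 hu).comp (cont_pC.comp h2)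
  have hv : Continuous fun θ : ℝ => ((Real.cos θ, Real.sin θ) : ℝ × ℝ) :=
    Real.continuous_cos.prodMk Real.continuous_sin
  exact (hc.clm_apply hv).neg

lemma cont_dnu2 (hu : ContDiff ℝ (⊤ : ℕ∞) u) : Continuous (dnu 2 u) := by
  have h : dnu 2 u = fun θ => fderiv ℝ (fderiv ℝ u) (pC 1 θ)
      (Real.cos θ, Real.sin θ) (Real.cos θ, Real.sin θ) :=
    funext fun θ => dnu_two_eq hu θ
  rw [h]
  have h2 : Continuous (fun θ : ℝ => ((1 : ℝ), θ)) := continuous_const.prodMk continuous_id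
  have hc : Continuous fun θ : ℝ => fderiv ℝ (fderiv ℝ u) (pC 1 θ) :=
    (cont_fderiv2 hu).comp (cont_pC.comp h2)
  have hv : Continuous fun θ : ℝ => ((Real.cos θ, Real.sin θ) : ℝ × ℝ) :=
    Real.continuous_cos.prodMk Real.continuous_sin
  exact (hc.clm_apply hv).clm_apply hv

lemma cont_Ga (hu : ContDiff ℝ (⊤ : ℕ∞) u) (hω : ContDiff ℝ (⊤ : ℕ∞) ω) : Continuous (fun p : ℝ × ℝ => Ga u ω p.1 p.2) := by
  unfold Ga
  have hP := cont_pC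
  have hcu1 : Continuous fun p : ℝ × ℝ => fderiv ℝ u (pC p.1 p.2) := (cont_fderiv1 hu).comp hP
  have hcω1 : Continuous fun p : ℝ × ℝ => fderiv ℝ ω (pC p.1 p.2) := (cont_fderiv1 hω).comp hP
  have hcu2 : Continuous fun p : ℝ × ℝ => fderiv ℝ (fderiv ℝ u) (pC p.1 p.2) :=
    (cont_fderiv2 hu).comp hP
  have hcω2 : Continuous fun p : ℝ × ℝ => fderiv ℝ (fderiv ℝ ω) (pC p.1 p.2) :=
    (cont_fderiv2 hω).comp hP
  have hfu := hcu1.clm_apply cont_csv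
  have hfω := hcω1.clm_apply cont_csv
  have hfu2 := (hcu2.clm_apply cont_csv).clm_apply cont_csv
  have hfω2 := (hcω2.clm_apply cont_csv).clm_apply cont_csv
  have hcu : Continuous fun p : ℝ × ℝ => u (pC p.1 p.2) := hu.continuous.comp hP
  have hcω : Continuous fun p : ℝ × ℝ => (starRingEnd ℂ) (ω (pC p.1 p.2)) :=
    continuous_star.comp (hω.continuous.comp hP)
  have hr : Continuous fun p : ℝ × ℝ => (p.1 : ℂ) :=
    Complex.continuous_ofReal.comp continuous_fst
  exact ((hfu.mul hcω).sub (hcu.mul (continuous_star.comp hfω))).add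
    (hr.mul ((hfu2.mul hcω).sub (hcu.mul (continuous_star.comp hfω2))))

lemma cont_Gc (hu : ContDiff ℝ (⊤ : ℕ∞) u) (hω : ContDiff ℝ (⊤ : ℕ∞) ω) : Continuous (fun p : ℝ × ℝ => Gc u ω p.1 p.2) := by
  unfold Gc
  have hP := cont_pC
  have hee : Continuous (fun p : ℝ × ℝ => ((-(Real.sin p.2), Real.cos p.2) : ℝ × ℝ)) :=
    ((Real.continuous_sin.comp continuous_snd).neg).prodMk
      (Real.continuous_cos.comp continuous_snd)
  have hwv : Continuous (fun p : ℝ × ℝ => ((-(Real.cos p.2), -(Real.sin p.2)) : ℝ × ℝ)) :=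
    ((Real.continuous_cos.comp continuous_snd).neg).prodMk
      ((Real.continuous_sin.comp continuous_snd).neg)
  have hcu1 : Continuous fun p : ℝ × ℝ => fderiv ℝ u (pC p.1 p.2) := (cont_fderiv1 hu).comp hP
  have hcω1 : Continuous fun p : ℝ × ℝ => fderiv ℝ ω (pC p.1 p.2) := (cont_fderiv1 hω).comp hP
  have hcu2 : Continuous fun p : ℝ × ℝ => fderiv ℝ (fderiv ℝ u) (pC p.1 p.2) :=
    (cont_fderiv2 hu).comp hP
  have hcω2 : Continuous fun p : ℝ × ℝ => fderiv ℝ (fderiv ℝ ω) (pC p.1 p.2) :=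
    (cont_fderiv2 hω).comp hP
  have hfu2 := (hcu2.clm_apply hee).clm_apply hee
  have hfω2 := (hcω2.clm_apply hee).clm_apply hee
  have hfu := hcu1.clm_apply hwv
  have hfω := hcω1.clm_apply hwv
  have hcu : Continuous fun p : ℝ × ℝ => u (pC p.1 p.2) := hu.continuous.comp hP
  have hcω : Continuous fun p : ℝ × ℝ => (starRingEnd ℂ) (ω (pC p.1 p.2)) :=
    continuous_star.comp (hω.continuous.comp hP)
  have hr : Continuous fun p : ℝ × ℝ => (p.1 : ℂ) :=
    Complex.continuous_ofReal.comp continuous_fst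
  exact (((hr.mul hfu2).add hfu).mul hcω).sub
    (hcu.mul ((hr.mul (continuous_star.comp hfω2)).add (continuous_star.comp hfω)))

end Cont

lemma green_disc {u ω : ℝ × ℝ → ℂ} (hu : ContDiff ℝ (⊤ : ℕ∞) u) (hω : ContDiff ℝ (⊤ : ℕ∞) ω) :
    ipDisc (lap u) ω - ipDisc u (lap ω)
      = ipCircle (bdy u) (dnu 1 ω) - ipCircle (dnu 1 u) (bdy ω) := by
  have hπ : (0 : ℝ) < π := Real.pi_pos
  set D : Set (ℝ × ℝ) := {x : ℝ × ℝ | x.1 ^ 2 + x.2 ^ 2 < 1} with hDdef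
  set S : Set (ℝ × ℝ) := Ioo (0 : ℝ) 1 ×ˢ Ioo (-π) π with hSdef
  set g : ℝ × ℝ → ℂ :=
    fun x => lap u x * (starRingEnd ℂ) (ω x) - u x * (starRingEnd ℂ) (lap ω x) with hgdef
  have hDmeas : MeasurableSet D := (isOpen_lt (by fun_prop) continuous_const).measurableSet
  have hSmeas : MeasurableSet S := measurableSet_Ioo.prod measurableSet_Ioo
  have hDsub : D ⊆ Metric.closedBall (0 : ℝ × ℝ) 1 := by
    intro x hx
    simp only [hDdef, mem_setOf_eq] at hx
    have h1 : |x.1| ≤ 1 := by nlinarith [_root_.sq_abs x.1, sq_nonneg x.2, abs_nonneg x.1]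
    have h2 : |x.2| ≤ 1 := by nlinarith [_root_.sq_abs x.2, sq_nonneg x.1, abs_nonneg x.2]
    rw [Metric.mem_closedBall, Prod.dist_eq]
    have e1 : dist x.1 (0 : ℝ × ℝ).1 = |x.1| := by simp [Real.dist_eq]
    have e2 : dist x.2 (0 : ℝ × ℝ).2 = |x.2| := by simp [Real.dist_eq]
    rw [e1, e2]
    exact max_le h1 h2
  have hcont1 : Continuous fun x => lap u x * (starRingEnd ℂ) (ω x) :=
    (cont_lap hu).mul (continuous_star.comp hω.continuous)
  have hcont2 : Continuous fun x => u x * (starRingEnd ℂ) (lap ω x) :=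
    hu.continuous.mul (continuous_star.comp (cont_lap hω))
  have hKc : IsCompact (Metric.closedBall (0 : ℝ × ℝ) 1) := isCompact_closedBall _ _
  have hi1 : IntegrableOn (fun x => lap u x * (starRingEnd ℂ) (ω x)) D :=
    (hcont1.continuousOn.integrableOn_compact hKc).mono_set hDsub
  have hi2 : IntegrableOn (fun x => u x * (starRingEnd ℂ) (lap ω x)) D :=
    (hcont2.continuousOn.integrableOn_compact hKc).mono_set hDsub
  have step1 : ipDisc (lap u) ω - ipDisc u (lap ω) = ∫ x in D, g x := by
    unfold ipDisc
    rw [← hDdef, ← integral_sub hi1 hi2]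
  -- polar change of variables
  have hsubS : S ⊆ polarCoord.target := by
    rw [polarCoord_target, hSdef]
    exact prod_mono Ioo_subset_Ioi_self Subset.rfl
  have key : EqOn (fun p : ℝ × ℝ => p.1 • (D.indicator g) (polarCoord.symm p))
      (S.indicator fun q : ℝ × ℝ => Ga u ω q.1 q.2 + Gc u ω q.1 q.2) polarCoord.target := by
    intro p hp
    rw [polarCoord_target, mem_prod] at hp
    obtain ⟨hp1, hp2⟩ := hp
    rw [mem_Ioi] at hp1
    have hsymm : polarCoord.symm p = pC p.1 p.2 := by
      rw [polarCoord_symm_apply]; rfl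
    have htrig := Real.sin_sq_add_cos_sq p.2
    have hx : (p.1 * Real.cos p.2) ^ 2 + (p.1 * Real.sin p.2) ^ 2 = p.1 ^ 2 := by
      linear_combination p.1 ^ 2 * htrig
    by_cases h1 : p.1 < 1
    · have hmemD : pC p.1 p.2 ∈ D := by
        simp only [hDdef, mem_setOf_eq, pC]
        rw [hx]
        nlinarith
      have hmemS : p ∈ S := by
        rw [hSdef, mem_prod]
        exact ⟨⟨hp1, h1⟩, hp2⟩
      simp only [hsymm, indicator_of_mem hmemD, indicator_of_mem hmemS]
      rw [Complex.real_smul, hgdef]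
      exact Gsum hu hω p.1 p.2
    · have hmemD : pC p.1 p.2 ∉ D := by
        simp only [hDdef, mem_setOf_eq, pC, not_lt]
        push_neg at h1
        rw [hx]
        nlinarith
      have hmemS : p ∉ S := by
        rw [hSdef, mem_prod]
        rintro ⟨⟨-, hc⟩, -⟩
        exact h1 hc
      simp only [hsymm, indicator_of_notMem hmemD, indicator_of_notMem hmemS, smul_zero]
  have step2 : ∫ x in D, g x = ∫ p in S, (Ga u ω p.1 p.2 + Gc u ω p.1 p.2) := by
    rw [← integral_indicator hDmeas, ← integral_comp_polarCoord_symm (D.indicator g),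
      setIntegral_congr_fun polarCoord.open_target.measurableSet key,
      setIntegral_indicator hSmeas, inter_eq_self_of_subset_right hsubS]
  -- integrability on S
  have hKS : IsCompact (Icc (0 : ℝ) 1 ×ˢ Icc (-π) π) := isCompact_Icc.prod isCompact_Icc
  have hSsub : S ⊆ Icc (0 : ℝ) 1 ×ˢ Icc (-π) π := by
    rw [hSdef]; exact prod_mono Ioo_subset_Icc_self Ioo_subset_Icc_self
  have hiGa : IntegrableOn (fun p : ℝ × ℝ => Ga u ω p.1 p.2) S :=
    (((cont_Ga hu hω).continuousOn.integrableOn_compact hKS)).mono_set hSsub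
  have hiGc : IntegrableOn (fun p : ℝ × ℝ => Gc u ω p.1 p.2) S :=
    (((cont_Gc hu hω).continuousOn.integrableOn_compact hKS)).mono_set hSsub
  have step3 : ∫ p in S, (Ga u ω p.1 p.2 + Gc u ω p.1 p.2)
      = (∫ p in S, Ga u ω p.1 p.2) + ∫ p in S, Gc u ω p.1 p.2 := integral_add hiGa hiGc
  have hrw : (volume : Measure (ℝ × ℝ)).restrict S
      = ((volume : Measure ℝ).restrict (Ioo 0 1)).prod
          ((volume : Measure ℝ).restrict (Ioo (-π) π)) := by
    rw [hSdef, MeasureTheory.Measure.volume_eq_prod, Measure.prod_restrict]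
  -- the angular part vanishes
  have hGc0 : ∫ p in S, Gc u ω p.1 p.2 = 0 := by
    have hiGc' : Integrable (fun p : ℝ × ℝ => Gc u ω p.1 p.2)
        (((volume : Measure ℝ).restrict (Ioo 0 1)).prod
          ((volume : Measure ℝ).restrict (Ioo (-π) π))) := hrw ▸ hiGc
    rw [show (∫ p in S, Gc u ω p.1 p.2) = ∫ p, Gc u ω p.1 p.2
        ∂((volume : Measure (ℝ × ℝ)).restrict S) from rfl, hrw,
      MeasureTheory.integral_prod _ hiGc']
    have inner0 : ∀ r ∈ Ioo (0 : ℝ) 1, (∫ t in Ioo (-π) π, Gc u ω r t) = 0 := by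
      intro r hr
      have hrne : (r : ℂ) ≠ 0 := by
        exact_mod_cast ne_of_gt hr.1
      have hcontc : Continuous fun t => Gc u ω r t :=
        (cont_Gc hu hω).comp (continuous_const.prodMk continuous_id)
      have hFTC : ∫ t in (-π)..π, (r : ℂ) * Gc u ω r t = Gk u ω r π - Gk u ω r (-π) :=
        intervalIntegral.integral_eq_sub_of_hasDerivAt (fun t _ => Gk_hasDerivAt hu hω r t)
          ((continuous_const.mul hcontc).intervalIntegrable _ _)
      have hper : Gk u ω r π = Gk u ω r (-π) := by
        have h := Gk_periodic (u := u) (ω := ω) r (-π)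
        rwa [show -π + 2 * π = π by ring] at h
      rw [intervalIntegral.integral_const_mul, hper, sub_self] at hFTC
      have h3 : ∫ t in (-π)..π, Gc u ω r t = 0 := by
        rcases mul_eq_zero.mp hFTC with h | h
        · exact absurd h hrne
        · exact h
      rw [← MeasureTheory.integral_Ioc_eq_integral_Ioo,
        ← intervalIntegral.integral_of_le (by linarith)]
      exact h3
    calc (∫ r in Ioo (0:ℝ) 1, ∫ t in Ioo (-π) π, Gc u ω r t)
        = ∫ _r in Ioo (0:ℝ) 1, (0 : ℂ) := setIntegral_congr_fun measurableSet_Ioo inner0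
      _ = 0 := by simp
  -- the radial part gives the boundary term
  have hGaEval : ∫ p in S, Ga u ω p.1 p.2 = ∫ θ in (0 : ℝ)..(2 * π), Gh u ω θ 1 := by
    have hiGa' : Integrable (fun p : ℝ × ℝ => Ga u ω p.1 p.2)
        (((volume : Measure ℝ).restrict (Ioo 0 1)).prod
          ((volume : Measure ℝ).restrict (Ioo (-π) π))) := hrw ▸ hiGa
    rw [show (∫ p in S, Ga u ω p.1 p.2) = ∫ p, Ga u ω p.1 p.2
        ∂((volume : Measure (ℝ × ℝ)).restrict S) from rfl, hrw,
      MeasureTheory.integral_prod_symm _ hiGa']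
    have inner1 : ∀ θ : ℝ, (∫ r in Ioo (0 : ℝ) 1, Ga u ω r θ) = Gh u ω θ 1 := by
      intro θ
      have hcontc : Continuous fun r => Ga u ω r θ :=
        (cont_Ga hu hω).comp (continuous_id.prodMk continuous_const)
      have hFTC : ∫ r in (0 : ℝ)..1, Ga u ω r θ = Gh u ω θ 1 - Gh u ω θ 0 :=
        intervalIntegral.integral_eq_sub_of_hasDerivAt (fun r _ => Gh_hasDerivAt hu hω θ r)
          (hcontc.intervalIntegrable _ _)
      rw [Gh_zero, sub_zero] at hFTC
      rw [← MeasureTheory.integral_Ioc_eq_integral_Ioo,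
        ← intervalIntegral.integral_of_le (by norm_num)]
      exact hFTC
    rw [show (∫ θ in Ioo (-π) π, ∫ r in Ioo (0:ℝ) 1, Ga u ω r θ)
        = ∫ θ in Ioo (-π) π, Gh u ω θ 1 from
      setIntegral_congr_fun measurableSet_Ioo fun θ _ => inner1 θ]
    rw [← MeasureTheory.integral_Ioc_eq_integral_Ioo,
      ← intervalIntegral.integral_of_le (by linarith)]
    have h := (Gh_periodic (u := u) (ω := ω) 1).intervalIntegral_add_eq (-π) 0
    rwa [show -π + 2 * π = π by ring, zero_add] at h
  -- identify the boundary term with the circle inner products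
  have hfinal : ∫ θ in (0 : ℝ)..(2 * π), Gh u ω θ 1
      = ipCircle (bdy u) (dnu 1 ω) - ipCircle (dnu 1 u) (bdy ω) := by
    have hint1 : IntervalIntegrable (fun θ => bdy u θ * (starRingEnd ℂ) (dnu 1 ω θ))
        volume 0 (2 * π) :=
      (((cont_bdy hu)).mul (continuous_star.comp (cont_dnu1 hω))).intervalIntegrable _ _
    have hint2 : IntervalIntegrable (fun θ => dnu 1 u θ * (starRingEnd ℂ) (bdy ω θ))
        volume 0 (2 * π) :=
      ((cont_dnu1 hu).mul (continuous_star.comp (cont_bdy hω))).intervalIntegrable _ _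
    unfold ipCircle
    rw [← intervalIntegral.integral_sub hint1 hint2]
    apply intervalIntegral.integral_congr
    intro θ _
    simp only [Gh, bdy_eq_pC, dnu_one_eq hu, dnu_one_eq hω, map_neg, Complex.ofReal_one, one_mul]
    ring
  rw [step1, step2, step3, hGc0, hGaEval, hfinal, add_zero]

lemma periodic_deriv' (f : ℝ → ℂ) (T : ℝ) (hp : ∀ t, f (t + T) = f t) (t : ℝ) :
    deriv f (t + T) = deriv f t := by
  have h1 : deriv (fun s => f (s + T)) t = deriv f (t + T) := deriv_comp_add_const f T t
  have h2 : (fun s => f (s + T)) = f := funext hp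
  rw [← h1, h2]

lemma ibp_circle {f g : ℝ → ℂ} (hf1 : Differentiable ℝ f) (hg1 : Differentiable ℝ g)
    (hfc : Continuous (deriv f)) (hgc : Continuous (deriv g))
    (hfp : ∀ t, f (t + 2 * π) = f t) (hgp : ∀ t, g (t + 2 * π) = g t) :
    ∫ θ in (0 : ℝ)..(2 * π), deriv f θ * (starRingEnd ℂ) (g θ)
      = -∫ θ in (0 : ℝ)..(2 * π), f θ * (starRingEnd ℂ) (deriv g θ) := by
  have hu : ∀ x ∈ uIcc (0 : ℝ) (2 * π), HasDerivAt f (deriv f x) x :=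
    fun x _ => (hf1 x).hasDerivAt
  have hv : ∀ x ∈ uIcc (0 : ℝ) (2 * π), HasDerivAt (fun t => (starRingEnd ℂ) (g t))
      ((starRingEnd ℂ) (deriv g x)) x := fun x _ => hasDerivAt_conj (hg1 x).hasDerivAt
  have h := intervalIntegral.integral_mul_deriv_eq_deriv_mul hu hv
    (hfc.intervalIntegrable _ _) ((continuous_star.comp hgc).intervalIntegrable _ _)
  have hb1 : f (2 * π) = f 0 := by simpa using hfp 0
  have hb2 : g (2 * π) = g 0 := by simpa using hgp 0
  rw [hb1, hb2] at h
  linear_combination h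

lemma one_le_inf : (1 : WithTop ℕ∞) ≤ ((⊤ : ℕ∞) : WithTop ℕ∞) := by
  exact_mod_cast le_top

lemma contDiff_deriv_inf {f : ℝ → ℂ} (hf : ContDiff ℝ (⊤ : ℕ∞) f) :
    ContDiff ℝ ((⊤ : ℕ∞) : WithTop ℕ∞) (deriv f) :=
  (contDiff_infty_iff_deriv.mp (hf.of_le (by simp))).2

lemma cont_iteratedDeriv2 {f : ℝ → ℂ} (hf : ContDiff ℝ (⊤ : ℕ∞) f) :
    Continuous (iteratedDeriv 2 f) := by
  rw [show (2 : ℕ) = 1 + 1 from rfl, iteratedDeriv_succ, iteratedDeriv_one]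
  exact (contDiff_deriv_inf hf).continuous_deriv one_le_inf

lemma ibp2_circle {f g : ℝ → ℂ} (hf : ContDiff ℝ (⊤ : ℕ∞) f) (hg : ContDiff ℝ (⊤ : ℕ∞) g)
    (hfp : ∀ t, f (t + 2 * π) = f t) (hgp : ∀ t, g (t + 2 * π) = g t) :
    ∫ θ in (0 : ℝ)..(2 * π), iteratedDeriv 2 f θ * (starRingEnd ℂ) (g θ)
      = ∫ θ in (0 : ℝ)..(2 * π), f θ * (starRingEnd ℂ) (iteratedDeriv 2 g θ) := by
  have hf' := contDiff_deriv_inf hf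
  have hg' := contDiff_deriv_inf hg
  have e2 : ∀ h : ℝ → ℂ, iteratedDeriv 2 h = deriv (deriv h) := fun h => by
    rw [show (2 : ℕ) = 1 + 1 from rfl, iteratedDeriv_succ, iteratedDeriv_one]
  have h1 : ∫ θ in (0 : ℝ)..(2 * π), deriv (deriv f) θ * (starRingEnd ℂ) (g θ)
      = -∫ θ in (0 : ℝ)..(2 * π), deriv f θ * (starRingEnd ℂ) (deriv g θ) :=
    ibp_circle (hf'.differentiable (by simp)) (hg.differentiable (by simp))
      (hf'.continuous_deriv one_le_inf) (hg.continuous_deriv (by simp))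
      (periodic_deriv' f (2 * π) hfp) hgp
  have h2 : ∫ θ in (0 : ℝ)..(2 * π), deriv f θ * (starRingEnd ℂ) (deriv g θ)
      = -∫ θ in (0 : ℝ)..(2 * π), f θ * (starRingEnd ℂ) (deriv (deriv g) θ) :=
    ibp_circle (hf.differentiable (by simp)) (hg'.differentiable (by simp))
      (hf.continuous_deriv (by simp)) (hg'.continuous_deriv one_le_inf)
      hfp (periodic_deriv' g (2 * π) hgp)
  rw [e2 f, e2 g, h1, h2, neg_neg]

/-- The special Green formula on the unit disc (Example 3 of the paper):
`(Δu,ω)_Ω + (Δu,w)_Γ + (∂_ν u + v, h₁)_Γ + (∂_ν²u + ∂_Γ v, h₂)_Γ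
 = (u,Δω)_Ω + (u, ∂_ν ω + ∂_Γ² w)_Γ + (D_ν u, −iω − iw + ih₁)_Γ
   + (D_ν² u, −w − h₂)_Γ + (v, h₁ − ∂_Γ h₂)_Γ`, where `D_ν = i∂_ν`. -/
theorem special_green_formula_disc (u ω : ℝ × ℝ → ℂ)
    (hu : ContDiff ℝ (⊤ : ℕ∞) u) (hω : ContDiff ℝ (⊤ : ℕ∞) ω)
    (v w h₁ h₂ : ℝ → ℂ)
    (hv : ContDiff ℝ (⊤ : ℕ∞) v) (hw : ContDiff ℝ (⊤ : ℕ∞) w)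
    (hh₁ : ContDiff ℝ (⊤ : ℕ∞) h₁) (hh₂ : ContDiff ℝ (⊤ : ℕ∞) h₂)
    (hvp : ∀ θ, v (θ + 2 * π) = v θ) (hwp : ∀ θ, w (θ + 2 * π) = w θ)
    (hh₁p : ∀ θ, h₁ (θ + 2 * π) = h₁ θ) (hh₂p : ∀ θ, h₂ (θ + 2 * π) = h₂ θ) :
    ipDisc (lap u) ω + ipCircle (bdy (lap u)) w
      + ipCircle (fun θ => dnu 1 u θ + v θ) h₁
      + ipCircle (fun θ => dnu 2 u θ + deriv v θ) h₂
    = ipDisc u (lap ω)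
      + ipCircle (bdy u) (fun θ => dnu 1 ω θ + iteratedDeriv 2 w θ)
      + ipCircle (fun θ => Complex.I * dnu 1 u θ)
          (fun θ => -Complex.I * bdy ω θ - Complex.I * w θ + Complex.I * h₁ θ)
      + ipCircle (fun θ => -(dnu 2 u θ)) (fun θ => -(w θ) - h₂ θ)
      + ipCircle v (fun θ => h₁ θ - deriv h₂ θ) := by
  have hbup : ∀ t, bdy u (t + 2 * π) = bdy u t := fun t => by
    simp [bdy, Real.cos_add_two_pi, Real.sin_add_two_pi]
  have hbuC : ContDiff ℝ (⊤ : ℕ∞) (bdy u) := hu.comp (Real.contDiff_cos.prodMk Real.contDiff_sin)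
  have hc_p := cont_dnu1 hu
  have hc_q := cont_dnu2 hu
  have hc_x := cont_bdy hu
  have hc_y := cont_bdy hω
  have hc_Y := cont_dnu1 hω
  have hc_w := hw.continuous
  have hc_h1 := hh₁.continuous
  have hc_h2 := hh₂.continuous
  have hc_v := hv.continuous
  have hc_dv : Continuous (deriv v) := hv.continuous_deriv (by simp)
  have hc_dh2 : Continuous (deriv h₂) := hh₂.continuous_deriv (by simp)
  have hc_d2x : Continuous (iteratedDeriv 2 (bdy u)) := cont_iteratedDeriv2 hbuC
  have key : ∀ {f g : ℝ → ℂ}, Continuous f → Continuous g →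
      IntervalIntegrable (fun θ => f θ * (starRingEnd ℂ) (g θ)) volume 0 (2 * π) :=
    fun hf hg => (hf.mul (continuous_star.comp hg)).intervalIntegrable _ _
  have e1 : ipCircle (bdy (lap u)) w = ipCircle (dnu 2 u) w - ipCircle (dnu 1 u) w
      + ipCircle (fun θ => iteratedDeriv 2 (bdy u) θ) w := by
    unfold ipCircle
    rw [← intervalIntegral.integral_sub (key hc_q hc_w) (key hc_p hc_w),
      ← intervalIntegral.integral_add ((key hc_q hc_w).sub (key hc_p hc_w)) (key hc_d2x hc_w)]
    apply intervalIntegral.integral_congr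
    intro θ _
    simp only [lap_bdy hu θ]
    ring
  have e2 : ipCircle (fun θ => dnu 1 u θ + v θ) h₁
      = ipCircle (dnu 1 u) h₁ + ipCircle v h₁ := by
    unfold ipCircle
    rw [← intervalIntegral.integral_add (key hc_p hc_h1) (key hc_v hc_h1)]
    apply intervalIntegral.integral_congr
    intro θ _
    ring
  have e3 : ipCircle (fun θ => dnu 2 u θ + deriv v θ) h₂
      = ipCircle (dnu 2 u) h₂ + ipCircle (fun θ => deriv v θ) h₂ := by
    unfold ipCircle
    rw [← intervalIntegral.integral_add (key hc_q hc_h2) (key hc_dv hc_h2)]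
    apply intervalIntegral.integral_congr
    intro θ _
    ring
  have e4 : ipCircle (bdy u) (fun θ => dnu 1 ω θ + iteratedDeriv 2 w θ)
      = ipCircle (bdy u) (dnu 1 ω) + ipCircle (bdy u) (fun θ => iteratedDeriv 2 w θ) := by
    unfold ipCircle
    rw [← intervalIntegral.integral_add (key hc_x hc_Y) (key hc_x (cont_iteratedDeriv2 hw))]
    apply intervalIntegral.integral_congr
    intro θ _
    simp only [map_add]
    ring
  have e5 : ipCircle (fun θ => Complex.I * dnu 1 u θ)
        (fun θ => -Complex.I * bdy ω θ - Complex.I * w θ + Complex.I * h₁ θ)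
      = ipCircle (dnu 1 u) h₁ - ipCircle (dnu 1 u) (bdy ω) - ipCircle (dnu 1 u) w := by
    unfold ipCircle
    rw [← intervalIntegral.integral_sub (key hc_p hc_h1) (key hc_p hc_y),
      ← intervalIntegral.integral_sub ((key hc_p hc_h1).sub (key hc_p hc_y)) (key hc_p hc_w)]
    apply intervalIntegral.integral_congr
    intro θ _
    simp only [map_add, map_sub, map_mul, map_neg, Complex.conj_I]
    ring_nf
    simp only [Complex.I_sq]
    ring
  have e6 : ipCircle (fun θ => -(dnu 2 u θ)) (fun θ => -(w θ) - h₂ θ)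
      = ipCircle (dnu 2 u) w + ipCircle (dnu 2 u) h₂ := by
    unfold ipCircle
    rw [← intervalIntegral.integral_add (key hc_q hc_w) (key hc_q hc_h2)]
    apply intervalIntegral.integral_congr
    intro θ _
    simp only [map_sub, map_neg]
    ring
  have e7 : ipCircle v (fun θ => h₁ θ - deriv h₂ θ)
      = ipCircle v h₁ - ipCircle v (fun θ => deriv h₂ θ) := by
    unfold ipCircle
    rw [← intervalIntegral.integral_sub (key hc_v hc_h1) (key hc_v hc_dh2)]
    apply intervalIntegral.integral_congr
    intro θ _
    simp only [map_sub]
    ring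
  have hB2 : ipCircle (fun θ => iteratedDeriv 2 (bdy u) θ) w
      = ipCircle (bdy u) (fun θ => iteratedDeriv 2 w θ) := by
    unfold ipCircle
    exact ibp2_circle hbuC hw hbup hwp
  have hC : ipCircle (fun θ => deriv v θ) h₂ = -ipCircle v (fun θ => deriv h₂ θ) := by
    unfold ipCircle
    exact ibp_circle (hv.differentiable (by simp)) (hh₂.differentiable (by simp))
      (hv.continuous_deriv (by simp)) (hh₂.continuous_deriv (by simp)) hvp hh₂p
  have hg := green_disc hu hω
  rw [e1, e2, e3, e4, e5, e6, e7]
  linear_combination hg + hB2 + hC
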